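/- Let 0 < δ < 1 and let k ≥ 1 be an integer. Then there exists a constant c = c(k,δ), independent of n, such that for every integer n ≥ k and every x ∈ [−1+δ, 1−δ], the k-th derivative of the n-th Chebyshev polynomial satisfies |T_n^{(k)}(x)| ≤ c·n^{k}. -/
import Mathlib


/-- The `n`-th Chebyshev polynomial of the first kind, as a real polynomial. -/
noncomputable def chebT (n : ℕ) : Polynomial ℝ := Polynomial.Chebyshev.T ℝ n

/-- The `n`-th Chebyshev coefficient `α_n[f] = (2/π)·∫_{−1}^{1} f(t)·T_n(t)/√(1−t²) dt`. -/
noncomputable def chebCoeff (f : ℝ → ℝ) (n : ℕ) : ℝ :=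
  (2 / Real.pi) * ∫ t in (-1:ℝ)..1, f t * (chebT n).eval t / Real.sqrt (1 - t ^ 2)

/-- `f` satisfies condition BV(r) on `[−1,1]`: `f ∈ C^{r−1}([−1,1])` and `f^{(r−1)}` is
absolutely continuous with derivative `g = f^{(r)}` of bounded variation. -/
def BVCond (f : ℝ → ℝ) (r : ℕ) : Prop :=
  1 ≤ r ∧ ContDiffOn ℝ (r - 1 : ℕ) f (Set.Icc (-1 : ℝ) 1) ∧
  ∃ g : ℝ → ℝ, BoundedVariationOn g (Set.Icc (-1:ℝ) 1) ∧
    ∀ x ∈ Set.Icc (-1:ℝ) 1,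
      iteratedDerivWithin (r - 1) f (Set.Icc (-1:ℝ) 1) x =
        iteratedDerivWithin (r - 1) f (Set.Icc (-1:ℝ) 1) (-1) + ∫ t in (-1:ℝ)..x, g t

open Polynomial Polynomial.Chebyshev

noncomputable def chebD (n : ℤ) (m : ℕ) : Polynomial ℝ :=
  Polynomial.derivative^[m] (T ℝ n)

lemma chebD_succ (n : ℤ) (m : ℕ) : chebD n (m+1) = derivative (chebD n m) := by
  simp [chebD, Function.iterate_succ_apply']

lemma cheb_ode (n : ℤ) :
    (1 - X ^ 2) * chebD n 2 = X * chebD n 1 - (n : ℝ[X]) ^ 2 * chebD n 0 := by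
  have h1 : chebD n 1 = (n : ℝ[X]) * U ℝ (n-1) := by
    simp [chebD, T_derivative_eq_U]
  have h2 : chebD n 2 = (n : ℝ[X]) * derivative (U ℝ (n-1)) := by
    rw [show (2:ℕ) = 1 + 1 from rfl, chebD_succ, h1]
    simp [derivative_mul]
  have h3 := add_one_mul_T_eq_poly_in_U (R := ℝ) (n-1)
  have e : (n - 1 : ℤ) + 1 = n := by ring
  rw [e] at h3
  have h0 : chebD n 0 = T ℝ n := rfl
  rw [h1, h2, h0]
  push_cast at h3 ⊢
  linear_combination (n : ℝ[X]) * h3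

lemma cheb_ode_iter (n : ℤ) (m : ℕ) :
    (1 - X ^ 2) * chebD n (m+2) =
      (2 * (m : ℝ[X]) + 1) * (X * chebD n (m+1)) +
        ((m : ℝ[X]) ^ 2 - (n : ℝ[X]) ^ 2) * chebD n m := by
  induction m with
  | zero =>
      have h := cheb_ode n
      push_cast
      linear_combination h
  | succ m ih =>
      have h := congrArg derivative ih
      simp only [derivative_mul, derivative_add, derivative_sub, derivative_one,
        derivative_X, derivative_X_pow, derivative_natCast, derivative_intCast,
        derivative_pow, derivative_ofNat, Nat.cast_ofNat, map_ofNat, ← chebD_succ] at h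
      have e1 : m + 1 + 2 = m + 2 + 1 := rfl
      have e2 : m + 1 + 1 = m + 2 := rfl
      rw [e1, e2]
      push_cast at h ⊢
      linear_combination h

lemma cheb_ode_eval (n : ℤ) (m : ℕ) (x : ℝ) :
    (1 - x ^ 2) * (chebD n (m+2)).eval x =
      (2 * (m : ℝ) + 1) * (x * (chebD n (m+1)).eval x) +
        ((m : ℝ) ^ 2 - (n : ℝ) ^ 2) * (chebD n m).eval x := by
  have h := congrArg (eval x) (cheb_ode_iter n m)
  simpa using h

lemma chebT_bound (n : ℤ) {x : ℝ} (h1 : -1 ≤ x) (h2 : x ≤ 1) :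
    |(T ℝ n).eval x| ≤ 1 := by
  rw [← Real.cos_arccos h1 h2, T_real_cos]
  exact Real.abs_cos_le_one _

lemma chebU_bound (n : ℤ) {x : ℝ} (h1 : -1 < x) (h2 : x < 1) :
    |(U ℝ n).eval x| * Real.sqrt (1 - x ^ 2) ≤ 1 := by
  have hc := Real.cos_arccos h1.le h2.le
  have hs : Real.sin (Real.arccos x) = Real.sqrt (1 - x ^ 2) := Real.sin_arccos x
  have hspos : (0:ℝ) < Real.sqrt (1 - x ^ 2) := Real.sqrt_pos.2 (by nlinarith)
  have h := U_real_cos (Real.arccos x) n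
  rw [hc, hs] at h
  calc |(U ℝ n).eval x| * Real.sqrt (1 - x ^ 2)
      = |(U ℝ n).eval x * Real.sqrt (1 - x ^ 2)| := by
        rw [abs_mul, abs_of_pos hspos]
    _ = |Real.sin ((n + 1) * Real.arccos x)| := by rw [h]
    _ ≤ 1 := Real.abs_sin_le_one _

lemma cheb_main (δ : ℝ) (hδ0 : 0 < δ) (hδ1 : δ < 1) (m : ℕ) :
    ∃ c : ℝ, 0 ≤ c ∧ ∀ n : ℕ, m ≤ n → ∀ x ∈ Set.Icc (-1 + δ) (1 - δ),
      |(chebD (n : ℤ) m).eval x| ≤ c * (n : ℝ) ^ m := by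
  suffices h : ∀ m : ℕ,
      (∃ c : ℝ, 0 ≤ c ∧ ∀ n : ℕ, m ≤ n → ∀ x ∈ Set.Icc (-1 + δ) (1 - δ),
        |(chebD (n : ℤ) m).eval x| ≤ c * (n : ℝ) ^ m) ∧
      (∃ c : ℝ, 0 ≤ c ∧ ∀ n : ℕ, m + 1 ≤ n → ∀ x ∈ Set.Icc (-1 + δ) (1 - δ),
        |(chebD (n : ℤ) (m + 1)).eval x| ≤ c * (n : ℝ) ^ (m + 1)) from (h m).1
  intro m
  induction m with
  | zero =>
    constructor
    · refine ⟨1, zero_le_one, fun n _ x hx => ?_⟩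
      obtain ⟨hxl, hxr⟩ := hx
      have : |(T ℝ (n : ℤ)).eval x| ≤ 1 :=
        chebT_bound (n : ℤ) (by linarith) (by linarith)
      simpa [chebD] using this
    · simp only [zero_add, pow_one]
      refine ⟨1 / Real.sqrt δ, by positivity, fun n hn x hx => ?_⟩
      obtain ⟨hxl, hxr⟩ := hx
      have hx1 : -1 < x := by linarith
      have hx2 : x < 1 := by linarith
      have hden : δ ≤ 1 - x ^ 2 := by nlinarith
      have hsδ : (0 : ℝ) < Real.sqrt δ := Real.sqrt_pos.2 hδ0
      have hU := chebU_bound ((n : ℤ) - 1) hx1 hx2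
      have hmono : Real.sqrt δ ≤ Real.sqrt (1 - x ^ 2) := Real.sqrt_le_sqrt hden
      have hUb : |(U ℝ ((n : ℤ) - 1)).eval x| ≤ 1 / Real.sqrt δ := by
        rw [le_div_iff₀ hsδ]
        calc |(U ℝ ((n : ℤ) - 1)).eval x| * Real.sqrt δ
            ≤ |(U ℝ ((n : ℤ) - 1)).eval x| * Real.sqrt (1 - x ^ 2) :=
              mul_le_mul_of_nonneg_left hmono (abs_nonneg _)
          _ ≤ 1 := hU
      have hD1 : chebD (n : ℤ) 1 = ((n : ℤ) : ℝ[X]) * U ℝ ((n : ℤ) - 1) := by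
        simp [chebD, T_derivative_eq_U]
      rw [hD1, eval_mul, eval_intCast, abs_mul]
      have hnn : |((n : ℤ) : ℝ)| = (n : ℝ) := by
        simp [abs_of_nonneg]
      rw [hnn]
      calc (n : ℝ) * |(U ℝ ((n : ℤ) - 1)).eval x|
          ≤ (n : ℝ) * (1 / Real.sqrt δ) :=
            mul_le_mul_of_nonneg_left hUb (by positivity)
        _ = 1 / Real.sqrt δ * (n : ℝ) := by ring
  | succ m ih =>
    refine ⟨ih.2, ?_⟩
    obtain ⟨c0, hc0, H0⟩ := ih.1
    obtain ⟨c1, hc1, H1⟩ := ih.2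
    refine ⟨((2 * (m : ℝ) + 1) * c1 + c0) / δ, by positivity, fun n hn x hx => ?_⟩
    rw [show m + 1 + 1 = m + 2 from rfl]
    obtain ⟨hxl, hxr⟩ := hx
    have hx1 : -1 < x := by linarith
    have hx2 : x < 1 := by linarith
    have hxabs : |x| ≤ 1 := abs_le.2 ⟨by linarith, by linarith⟩
    have hden : δ ≤ 1 - x ^ 2 := by nlinarith
    have hn1 : (1 : ℝ) ≤ (n : ℝ) := by exact_mod_cast (by omega : 1 ≤ n)
    have hmn : (m : ℝ) ≤ (n : ℝ) := by exact_mod_cast (by omega : m ≤ n)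
    have hB1 := H1 n (by omega) x ⟨hxl, hxr⟩
    have hB0 := H0 n (by omega) x ⟨hxl, hxr⟩
    have ode := cheb_ode_eval (n : ℤ) m x
    push_cast at ode
    have hp1 : (n : ℝ) ^ (m + 1) ≤ (n : ℝ) ^ (m + 2) :=
      pow_le_pow_right₀ hn1 (by omega)
    have hp2 : (n : ℝ) ^ 2 * (n : ℝ) ^ m = (n : ℝ) ^ (m + 2) := by ring
    have key : δ * |(chebD (n : ℤ) (m + 2)).eval x|
        ≤ ((2 * (m : ℝ) + 1) * c1 + c0) * (n : ℝ) ^ (m + 2) := by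
      calc δ * |(chebD (n : ℤ) (m + 2)).eval x|
          ≤ (1 - x ^ 2) * |(chebD (n : ℤ) (m + 2)).eval x| :=
            mul_le_mul_of_nonneg_right hden (abs_nonneg _)
        _ = |(1 - x ^ 2) * (chebD (n : ℤ) (m + 2)).eval x| := by
            rw [abs_mul, abs_of_nonneg (by linarith : (0:ℝ) ≤ 1 - x ^ 2)]
        _ = |(2 * (m : ℝ) + 1) * (x * (chebD (n : ℤ) (m + 1)).eval x) +
              ((m : ℝ) ^ 2 - (n : ℝ) ^ 2) * (chebD (n : ℤ) m).eval x| := by rw [ode]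
        _ ≤ |(2 * (m : ℝ) + 1) * (x * (chebD (n : ℤ) (m + 1)).eval x)| +
              |((m : ℝ) ^ 2 - (n : ℝ) ^ 2) * (chebD (n : ℤ) m).eval x| := abs_add_le _ _
        _ = (2 * (m : ℝ) + 1) * (|x| * |(chebD (n : ℤ) (m + 1)).eval x|) +
              ((n : ℝ) ^ 2 - (m : ℝ) ^ 2) * |(chebD (n : ℤ) m).eval x| := by
            rw [abs_mul, abs_mul, abs_mul,
              abs_of_nonneg (by positivity : (0:ℝ) ≤ 2 * (m : ℝ) + 1),
              show |(m : ℝ) ^ 2 - (n : ℝ) ^ 2| = (n : ℝ) ^ 2 - (m : ℝ) ^ 2 by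
                rw [abs_sub_comm]; exact abs_of_nonneg (by nlinarith)]
        _ ≤ (2 * (m : ℝ) + 1) * (1 * (c1 * (n : ℝ) ^ (m + 1))) +
              (n : ℝ) ^ 2 * (c0 * (n : ℝ) ^ m) := by
            have e1 : |x| * |(chebD (n : ℤ) (m + 1)).eval x| ≤ 1 * (c1 * (n : ℝ) ^ (m + 1)) :=
              mul_le_mul hxabs hB1 (abs_nonneg _) zero_le_one
            have e0 : ((n : ℝ) ^ 2 - (m : ℝ) ^ 2) * |(chebD (n : ℤ) m).eval x|
                ≤ (n : ℝ) ^ 2 * (c0 * (n : ℝ) ^ m) := by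
              calc ((n : ℝ) ^ 2 - (m : ℝ) ^ 2) * |(chebD (n : ℤ) m).eval x|
                  ≤ (n : ℝ) ^ 2 * |(chebD (n : ℤ) m).eval x| :=
                    mul_le_mul_of_nonneg_right (by nlinarith) (abs_nonneg _)
                _ ≤ (n : ℝ) ^ 2 * (c0 * (n : ℝ) ^ m) :=
                    mul_le_mul_of_nonneg_left hB0 (by positivity)
            have e1' : (2 * (m : ℝ) + 1) * (|x| * |(chebD (n : ℤ) (m + 1)).eval x|)
                ≤ (2 * (m : ℝ) + 1) * (1 * (c1 * (n : ℝ) ^ (m + 1))) :=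
              mul_le_mul_of_nonneg_left e1 (by positivity)
            linarith
        _ ≤ ((2 * (m : ℝ) + 1) * c1 + c0) * (n : ℝ) ^ (m + 2) := by
            nlinarith [mul_le_mul_of_nonneg_left hp1
              (by positivity : (0:ℝ) ≤ (2 * (m : ℝ) + 1) * c1)]
    rw [div_mul_eq_mul_div, le_div_iff₀ hδ0]
    linarith


/-- on `[−1+δ, 1−δ]` the `k`-th derivative of `T_n` is `O(n^k)`. -/
theorem stmt8 (δ : ℝ) (hδ0 : 0 < δ) (hδ1 : δ < 1) (k : ℕ) (hk : 1 ≤ k) :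
    ∃ c : ℝ, ∀ n : ℕ, k ≤ n → ∀ x ∈ Set.Icc (-1 + δ) (1 - δ),
      |(Polynomial.derivative^[k] (chebT n)).eval x| ≤ c * (n : ℝ) ^ k := by
  obtain ⟨c, _, hc⟩ := cheb_main δ hδ0 hδ1 k
  exact ⟨c, fun n hn x hx => hc n hn x hx⟩
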